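/- Let μ be a Borel probability measure on ℝ and suppose there exists a real-valued random variable X, independent of a uniform random variable U on (0,1), such that μ is the law of U·X + c for some c ∈ ℝ. Then Im((z − c)·G_μ'(z)) ≥ 0 for all z ∈ ℂ⁺, where G_μ is the Cauchy transform of μ. -/

import Mathlib

/-!
Write `w = z - c` and `ν` for the law of `X`. Differentiating under the integral,
`(z - c) G_μ'(z) = -E[w / (w - U X)²]`. By independence this is an integral over `du ⊗ dν(x)`,
and the inner integral `∫₀¹ w / (w - u x)² du = 1 / (w - x)` is elementary, so
`(z - c) G_μ'(z) = -G_ν(w)`. A Cauchy transform has nonpositive imaginary part on the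
upper half-plane, since `Im (w - x)⁻¹ = -Im w / |w - x|²`.
-/

open MeasureTheory Complex ProbabilityTheory

noncomputable def cauchyTransform (μ : Measure ℝ) (z : ℂ) : ℂ := ∫ x, (z - x)⁻¹ ∂μ

section UpperHalfPlane

variable {w : ℂ}

lemma sub_ofReal_ne_zero (hw : 0 < w.im) (t : ℝ) : w - t ≠ 0 := by
  intro h
  simpa using hw.ne' (by simpa using congrArg Complex.im h)

lemma norm_inv_sub_ofReal_le (hw : 0 < w.im) (t : ℝ) : ‖(w - t)⁻¹‖ ≤ w.im⁻¹ := by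
  rw [norm_inv]
  refine inv_anti₀ hw ?_
  simpa using (Complex.abs_im_le_norm (w - t)).trans' (le_abs_self _)

lemma norm_inv_sub_ofReal_sq_le (hw : 0 < w.im) (t : ℝ) : ‖((w - t) ^ 2)⁻¹‖ ≤ (w.im ^ 2)⁻¹ := by
  rw [← inv_pow, norm_pow, ← inv_pow]
  exact pow_le_pow_left₀ (norm_nonneg _) (norm_inv_sub_ofReal_le hw t) 2

lemma im_inv_sub_ofReal_nonpos (hw : 0 < w.im) (t : ℝ) : (w - t)⁻¹.im ≤ 0 := by
  rw [inv_im, sub_im, ofReal_im, sub_zero, neg_div]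
  exact neg_nonpos.2 (div_nonneg hw.le (normSq_nonneg _))

lemma integral_mul_inv_sub_mul_sq (hw : 0 < w.im) (x : ℝ) :
    ∫ u in Set.Ioo (0 : ℝ) 1, w * ((w - (u * x : ℝ)) ^ 2)⁻¹ = (w - x)⁻¹ := by
  have hne (u : ℝ) : w - (u * x : ℝ) ≠ 0 := sub_ofReal_ne_zero hw _
  -- `u / (w - u x)` is an antiderivative, also when `x = 0`
  have hderiv (u : ℝ) : HasDerivAt (fun u : ℝ => (u : ℂ) / (w - (u * x : ℝ)))
      (w * ((w - (u * x : ℝ)) ^ 2)⁻¹) u := by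
    have hid : HasDerivAt (fun u : ℝ => (u : ℂ)) 1 u := (hasDerivAt_id u).ofReal_comp
    have hden : HasDerivAt (fun u : ℝ => w - (u * x : ℝ)) (-x) u := by
      simpa using (hid.mul_const (x : ℂ)).const_sub w
    refine (hid.fun_div hden (hne u)).congr_deriv ?_
    field_simp
    push_cast
    ring
  have hcont : Continuous (fun u : ℝ => w * ((w - (u * x : ℝ)) ^ 2)⁻¹) :=
    continuous_const.mul ((by fun_prop : Continuous fun u : ℝ => (w - (u * x : ℝ)) ^ 2).inv₀
      fun u => pow_ne_zero 2 (hne u))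
  rw [← integral_Ioc_eq_integral_Ioo, ← intervalIntegral.integral_of_le zero_le_one,
    intervalIntegral.integral_eq_sub_of_hasDerivAt (fun u _ => hderiv u)
      (hcont.intervalIntegrable 0 1)]
  simp

end UpperHalfPlane

section CauchyTransform

variable (μ : Measure ℝ) [IsFiniteMeasure μ] {z : ℂ}

lemma integrable_inv_sub_ofReal (hz : 0 < z.im) : Integrable (fun x : ℝ => (z - x)⁻¹) μ :=
  (integrable_const z.im⁻¹).mono' (by fun_prop)
    (Filter.Eventually.of_forall (norm_inv_sub_ofReal_le hz))

lemma im_cauchyTransform_nonpos (hz : 0 < z.im) : (cauchyTransform μ z).im ≤ 0 := by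
  rw [cauchyTransform, ← imCLM_apply, ← imCLM.integral_comp_comm (integrable_inv_sub_ofReal μ hz)]
  exact integral_nonpos (im_inv_sub_ofReal_nonpos hz)

lemma hasDerivAt_cauchyTransform (hz : 0 < z.im) :
    HasDerivAt (cauchyTransform μ) (-∫ x, ((z - x) ^ 2)⁻¹ ∂μ) z := by
  set ε := z.im / 2
  have hε : 0 < ε := half_pos hz
  have hs : {w : ℂ | ε < w.im} ∈ nhds z :=
    (isOpen_lt continuous_const continuous_im).mem_nhds (half_lt_self hz)
  rw [← integral_neg]
  refine (hasDerivAt_integral_of_dominated_loc_of_deriv_le (F := fun w (x : ℝ) => (w - (x : ℂ))⁻¹)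
    (F' := fun w (x : ℝ) => -((w - (x : ℂ)) ^ 2)⁻¹) (bound := fun _ => (ε ^ 2)⁻¹) hs
    (Filter.Eventually.of_forall fun _ => by fun_prop) (integrable_inv_sub_ofReal μ hz)
    (by fun_prop) ?_ (integrable_const _) ?_).2
  · refine Filter.Eventually.of_forall fun x w (hw : ε < w.im) => ?_
    rw [norm_neg]
    refine (norm_inv_sub_ofReal_sq_le (hε.trans hw) x).trans ?_
    gcongr
  · refine Filter.Eventually.of_forall fun x w (hw : ε < w.im) => ?_
    exact ((hasDerivAt_inv (sub_ofReal_ne_zero (hε.trans hw) x)).comp w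
      ((hasDerivAt_id' w).sub_const (x : ℂ))).congr_deriv (mul_one _)

end CauchyTransform

lemma ProbabilityTheory.IndepFun.integral_comp_eq_integral_integral {Ω α β E : Type*}
    [MeasurableSpace Ω] [MeasurableSpace α] [MeasurableSpace β] [NormedAddCommGroup E] [NormedSpace ℝ E]
    {P : Measure Ω} [IsFiniteMeasure P] {U : Ω → α} {X : Ω → β} (hU : AEMeasurable U P)
    (hX : AEMeasurable X P) (hindep : IndepFun U X P) {f : α × β → E}
    (hf : Integrable f ((P.map U).prod (P.map X))) :
    ∫ ω, f (U ω, X ω) ∂P = ∫ x, ∫ u, f (u, x) ∂P.map U ∂P.map X := by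
  have hjoint := (indepFun_iff_map_prod_eq_prod_map_map hU hX).1 hindep
  rw [← integral_prod_symm f hf, ← hjoint,
    integral_map (hU.prodMk hX) (hjoint ▸ hf.aestronglyMeasurable)]

lemma mul_integral_inv_sub_sq_map_uniform_mul_add {Ω : Type*} [MeasurableSpace Ω]
    {P : Measure Ω} [IsProbabilityMeasure P] {U X : Ω → ℝ} (hU : AEMeasurable U P)
    (hX : AEMeasurable X P) (hUlaw : P.map U = volume.restrict (Set.Ioo (0 : ℝ) 1))
    (hindep : IndepFun U X P) (c : ℝ) {z : ℂ} (hz : 0 < z.im) :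
    (z - c) * ∫ x, ((z - x) ^ 2)⁻¹ ∂P.map (fun ω => U ω * X ω + c) =
      cauchyTransform (P.map X) (z - c) := by
  set w := z - c
  have hw : 0 < w.im := by simpa [w] using hz
  have hf : Integrable (fun p : ℝ × ℝ => w * ((w - (p.1 * p.2 : ℝ)) ^ 2)⁻¹)
      ((P.map U).prod (P.map X)) :=
    (integrable_const (‖w‖ * (w.im ^ 2)⁻¹)).mono' (by fun_prop)
      (Filter.Eventually.of_forall fun p => by
        rw [norm_mul]; gcongr; exact norm_inv_sub_ofReal_sq_le hw _)
  calc (z - c) * ∫ x, ((z - x) ^ 2)⁻¹ ∂P.map (fun ω => U ω * X ω + c)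
      = ∫ ω, w * ((w - (U ω * X ω : ℝ)) ^ 2)⁻¹ ∂P := by
        rw [integral_map (by fun_prop) (by fun_prop), ← integral_const_mul]
        congr! 4 with ω
        push_cast; ring
    _ = ∫ x, (∫ u in Set.Ioo (0 : ℝ) 1, w * ((w - (u * x : ℝ)) ^ 2)⁻¹) ∂P.map X := by
        simpa only [hUlaw] using hindep.integral_comp_eq_integral_integral hU hX hf
    _ = cauchyTransform (P.map X) w := by
        simp only [integral_mul_inv_sub_mul_sq hw, cauchyTransform]

/-- If `μ` is the law of `U·X + c`, where `U` is uniform on `(0,1)` and independent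
of the real random variable `X`, then `Im ((z - c)·G_μ'(z)) ≥ 0` for every `z` in
the upper half-plane, where `G_μ` is the Cauchy transform of `μ`. -/
theorem unimodal_cauchy_deriv {Ω : Type*} [MeasureSpace Ω]
    [IsProbabilityMeasure (ℙ : Measure Ω)]
    (U X : Ω → ℝ) (hUmeas : Measurable U) (hXmeas : Measurable X)
    (hU : Measure.map U ℙ = volume.restrict (Set.Ioo (0 : ℝ) 1))
    (hindep : IndepFun U X ℙ)
    (c : ℝ) (μ : Measure ℝ) (hμ : μ = Measure.map (fun ω => U ω * X ω + c) ℙ)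
    (z : ℂ) (hz : 0 < z.im) :
    0 ≤ ((z - (c : ℂ)) * deriv (fun w : ℂ => ∫ x : ℝ, (w - (x : ℂ))⁻¹ ∂μ) z).im := by
  have : IsProbabilityMeasure μ := hμ ▸ Measure.isProbabilityMeasure_map (by fun_prop)
  have hzc : 0 < (z - c).im := by simpa using hz
  change 0 ≤ ((z - c) * deriv (cauchyTransform μ) z).im
  rw [(hasDerivAt_cauchyTransform μ hz).deriv, mul_neg, neg_im, neg_nonneg, hμ,
    mul_integral_inv_sub_sq_map_uniform_mul_add hUmeas.aemeasurable hXmeas.aemeasurable hU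
      hindep c hz]
  exact im_cauchyTransform_nonpos _ hzc
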